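/- arXiv:math/9904174 — 2 statements merged into one kernel-verified Lean document; each statement's English description precedes it below -/
import Mathlib

section
/- Let φ be a state of a C*-algebra A, let e ∈ A be a projection with φ(e) = 1 and e ≠ 1 inside the Cuntz algebra O_d, and suppose w is a partial isometry with w*w = 1 − s₁ e s₁* and w w* = 1 − e. Then u = e s₁* + w is a unitary in O_d satisfying u s₁ e = e, and hence φ(u s₁) = 1. -/
open scoped ComplexOrder

noncomputable section

/-- A Cuntz family of `d` isometries with mutually orthogonal ranges summing to one,
which generates the ambient C*-algebra.  A C*-algebra carrying such a family (for `2 ≤ d`)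
is a copy of the Cuntz algebra `O_d`. -/
structure CuntzFamily (A : Type) [CStarAlgebra A] (d : ℕ) : Type where
  s : Fin d → A
  isometry : ∀ i j : Fin d, star (s i) * s j = if i = j then (1 : A) else 0
  complete : ∑ i : Fin d, s i * star (s i) = 1
  generates : (StarAlgebra.adjoin ℂ (Set.range s)).topologicalClosure = ⊤

variable {A : Type} [CStarAlgebra A] {d : ℕ}

/-- The Wick-ordered word `s_I = s_{i₁} ⋯ s_{iₙ}`. -/
def cuntzWord (S : CuntzFamily A d) (I : List (Fin d)) : A := (I.map S.s).prod

/-- The canonical endomorphism `λ(x) = ∑ᵢ sᵢ x sᵢ*` (as a bare function). -/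
def cuntzLam (S : CuntzFamily A d) (x : A) : A := ∑ i : Fin d, S.s i * x * star (S.s i)

/-- A state: a unital positive continuous linear functional. -/
def IsState (φ : A →L[ℂ] ℂ) : Prop := φ 1 = 1 ∧ ∀ a : A, 0 ≤ φ (star a * a)

/-- Purity of the restriction of a functional to a subset `B` (typically a C*-subalgebra):
it is not a proper convex combination of (restrictions of) two states. -/
def IsPureOn (B : Set A) (φ : A → ℂ) : Prop :=
  ∀ (ψ₁ ψ₂ : A →L[ℂ] ℂ) (t : ℝ), IsState ψ₁ → IsState ψ₂ → 0 < t → t < 1 →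
    (∀ b ∈ B, φ b = t * ψ₁ b + (1 - t) * ψ₂ b) → ∀ b ∈ B, ψ₁ b = φ b

/-- A pure state. -/
def IsPureState (φ : A →L[ℂ] ℂ) : Prop := IsState φ ∧ IsPureOn Set.univ φ

/-- The fixed point algebra of a family of automorphisms (e.g. the gauge action);
for the gauge action on `O_d` this is `UHF_d`. -/
def fixedAlgebra (τ : Circle → A ≃⋆ₐ[ℂ] A) : StarSubalgebra ℂ A where
  carrier := {x | ∀ z, τ z x = x}
  mul_mem' := by intro a b ha hb z; rw [map_mul, ha z, hb z]
  add_mem' := by intro a b ha hb z; rw [map_add, ha z, hb z]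
  algebraMap_mem' := by
    intro r z
    rw [Algebra.algebraMap_eq_smul_one, map_smul, map_one]
  star_mem' := by intro a ha z; rw [map_star, ha z]

/-- Disjointness of (the restrictions to the C*-subalgebra `B` of) two functionals:
any two cyclic representations of `B` implementing them as vector states admit only the
zero intertwiner.  (For states this is disjointness of the GNS representations.) -/
def DisjointOn (B : StarSubalgebra ℂ A) (φ ψ : A → ℂ) : Prop :=
  ∀ (H₁ H₂ : Type) [NormedAddCommGroup H₁] [InnerProductSpace ℂ H₁] [CompleteSpace H₁]
    [NormedAddCommGroup H₂] [InnerProductSpace ℂ H₂] [CompleteSpace H₂]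
    (π₁ : B →⋆ₐ[ℂ] (H₁ →L[ℂ] H₁)) (π₂ : B →⋆ₐ[ℂ] (H₂ →L[ℂ] H₂)) (Ω₁ : H₁) (Ω₂ : H₂),
    (∀ b : B, φ (b : A) = inner ℂ Ω₁ (π₁ b Ω₁)) →
    (∀ b : B, ψ (b : A) = inner ℂ Ω₂ (π₂ b Ω₂)) →
    Dense ((Submodule.span ℂ (Set.range fun b : B => π₁ b Ω₁) : Submodule ℂ H₁) : Set H₁) →
    Dense ((Submodule.span ℂ (Set.range fun b : B => π₂ b Ω₂) : Submodule ℂ H₂) : Set H₂) →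
    ∀ T : H₁ →L[ℂ] H₂, (∀ b : B, T.comp (π₁ b) = (π₂ b).comp T) → T = 0

lemma herm_aux' {A : Type} [CStarAlgebra A] (φ : A →L[ℂ] ℂ)
    (hpos : ∀ a : A, 0 ≤ φ (star a * a)) (u v : A) :
    φ (star v * u) = starRingEnd ℂ (φ (star u * v)) := by
  have h0 : ∀ x : A, (φ (star x * x)).im = 0 := fun x =>
    ((Complex.le_def.mp (hpos x)).2).symm
  have e1 : star (u + v) * (u + v)
      = star u * u + (star u * v + (star v * u + star v * v)) := by
    rw [star_add, add_mul, mul_add, mul_add]; abel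
  have him1 : (φ (star u * v)).im + (φ (star v * u)).im = 0 := by
    have := h0 (u + v)
    rw [e1, map_add, map_add, map_add] at this
    simpa [h0 u, h0 v] using this
  have e2 : star (u + Complex.I • v) * (u + Complex.I • v)
      = star u * u + (Complex.I • (star u * v) +
        ((-Complex.I) • (star v * u) + star v * v)) := by
    rw [star_add, star_smul, add_mul, mul_add, mul_add, mul_smul_comm,
      smul_mul_assoc, smul_mul_assoc, mul_smul_comm, smul_smul]
    simp only [Complex.star_def, Complex.conj_I, neg_mul, Complex.I_mul_I, neg_neg, one_smul]
    abel
  have him2 : (φ (star u * v)).re - (φ (star v * u)).re = 0 := by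
    have := h0 (u + Complex.I • v)
    rw [e2, map_add, map_add, map_add, map_smul, map_smul] at this
    simp only [Complex.add_im, h0 u, h0 v, smul_eq_mul, Complex.mul_im,
      Complex.I_re, Complex.I_im, Complex.neg_re, Complex.neg_im] at this
    linarith
  apply Complex.ext
  · simp only [Complex.conj_re]; linarith
  · simp only [Complex.conj_im]; linarith

lemma null_aux {A : Type} [CStarAlgebra A] (φ : A →L[ℂ] ℂ)
    (hpos : ∀ a : A, 0 ≤ φ (star a * a)) (q : A) (hq : star q = q)
    (hq0 : φ (q * q) = 0) (a : A) : φ (a * q) = 0 := by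
  set z := φ (a * q) with hz
  by_contra hzne
  have hnz : 0 < Complex.normSq z := Complex.normSq_pos.mpr hzne
  set R := (φ (a * star a)).re with hR
  set t : ℝ := (R + 1) / (2 * Complex.normSq z) with ht
  set c : ℂ := -(t : ℂ) * starRingEnd ℂ z with hc
  have hqa : φ (q * star a) = starRingEnd ℂ z := by
    have := herm_aux' φ hpos (star a) q
    rwa [hq, star_star] at this
  have hx : star (star a + c • q) * (star a + c • q)
      = a * star a + (c • (a * q) + ((starRingEnd ℂ c) • (q * star a) +
        ((starRingEnd ℂ c) * c) • (q * q))) := by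
    rw [star_add, star_smul, star_star, hq, add_mul, mul_add, mul_add,
      mul_smul_comm, smul_mul_assoc, smul_mul_assoc, mul_smul_comm, smul_smul]
    simp only [Complex.star_def]
    abel
  have hkey := hpos (star a + c • q)
  rw [hx, map_add, map_add, map_add, map_smul, map_smul, map_smul, hqa, hq0,
    smul_eq_mul, smul_eq_mul, smul_eq_mul, mul_zero, add_zero] at hkey
  have hcz : c * z = -(t : ℂ) * Complex.normSq z := by
    rw [hc, mul_assoc, mul_comm (starRingEnd ℂ z) z, Complex.mul_conj]
  have hczc : (starRingEnd ℂ c) * (starRingEnd ℂ z) = -(t : ℂ) * Complex.normSq z := by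
    rw [hc, map_mul, map_neg, Complex.conj_ofReal, Complex.conj_conj, mul_assoc,
      Complex.mul_conj]
  rw [hcz, hczc] at hkey
  have hre := (Complex.le_def.mp hkey).1
  simp only [Complex.zero_re, Complex.add_re, Complex.neg_re, Complex.mul_re,
    Complex.ofReal_re, Complex.ofReal_im, mul_zero, zero_mul, sub_zero] at hre
  have h2 : t * Complex.normSq z = (R + 1) / 2 := by
    rw [ht]; field_simp
  nlinarith [hre, h2]

/-- If `φ` is a state of `O_d`, `e` is a projection with `φ(e) = 1` and
`e ≠ 1`, and `w` is a partial isometry with `w*w = 1 - s₁ e s₁*` and `w w* = 1 - e`, then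
`u = e s₁* + w` is a unitary with `u s₁ e = e`, and hence `φ(u s₁) = 1`. -/
theorem stmt_10 {A : Type} [CStarAlgebra A] {d : ℕ} (hd : 2 ≤ d) (S : CuntzFamily A d)
    (φ : A →L[ℂ] ℂ) (hφ : IsState φ)
    (e : A) (heproj : IsIdempotentElem e) (hesa : IsSelfAdjoint e)
    (heφ : φ e = 1) (hne : e ≠ 1)
    (w : A)
    (hw₁ : star w * w = 1 - S.s ⟨0, by omega⟩ * e * star (S.s ⟨0, by omega⟩))
    (hw₂ : w * star w = 1 - e) :
    (e * star (S.s ⟨0, by omega⟩) + w) ∈ unitary A ∧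
    (e * star (S.s ⟨0, by omega⟩) + w) * S.s ⟨0, by omega⟩ * e = e ∧
    φ ((e * star (S.s ⟨0, by omega⟩) + w) * S.s ⟨0, by omega⟩) = 1 := by
  set s : A := S.s ⟨0, by omega⟩ with hs
  have hss : star s * s = 1 := by
    have := S.isometry ⟨0, by omega⟩ ⟨0, by omega⟩
    simpa using this
  -- P := s e s* is idempotent
  have hP : (s * e * star s) * (s * e * star s) = s * e * star s := by
    have h1 : s * e * star s * (s * e * star s) = s * e * ((star s * s) * (e * star s)) := by
      simp only [mul_assoc]
    rw [h1, hss, one_mul, ← mul_assoc, mul_assoc s e e, heproj]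
  have hp : (star w * w) * (star w * w) = star w * w := by
    rw [hw₁, sub_mul, one_mul, mul_sub, mul_one, hP, sub_self, sub_zero]
  -- w is a partial isometry: w (w* w) = w
  have hwp : w * (star w * w) = w := by
    have hp' : star w * (w * (star w * w)) = star w * w := by
      simpa only [mul_assoc] using hp
    have hx0 : star (w * (star w * w) - w) * (w * (star w * w) - w) = 0 := by
      simp only [star_sub, star_mul, star_star, sub_mul, mul_sub, mul_assoc, hp']
      abel
    have hn := CStarRing.norm_star_mul_self (x := w * (star w * w) - w)
    rw [hx0, norm_zero] at hn
    have := mul_self_eq_zero.mp hn.symm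
    rw [norm_eq_zero, sub_eq_zero] at this
    exact this
  -- e w = 0
  have hew : e * w = 0 := by
    conv_lhs => rw [← hwp]
    rw [← mul_assoc, ← mul_assoc, mul_assoc e w (star w), hw₂, mul_sub, mul_one,
      heproj, sub_self, zero_mul]
  -- w* e = 0
  have hwse2 : star w * e = 0 := by
    have h := congrArg star hew
    rwa [star_mul, hesa.star_eq, star_zero] at h
  -- (s e s*)(s e) = s e
  have hPse : (s * e * star s) * (s * e) = s * e := by
    rw [mul_assoc (s * e) (star s) (s * e), ← mul_assoc (star s) s e, hss, one_mul,
      mul_assoc, heproj]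
  -- w s e = 0
  have hws : w * s * e = 0 := by
    rw [mul_assoc]
    conv_lhs => rw [← hwp]
    rw [hw₁, mul_assoc, sub_mul, one_mul, hPse, sub_self, mul_zero]
  -- e s* w* = 0
  have t5 : e * star s * star w = 0 := by
    have h := congrArg star hws
    rwa [star_zero, star_mul, star_mul, hesa.star_eq, ← mul_assoc] at h
  set u : A := e * star s + w with hu
  have hstaru : star u = s * e + star w := by
    rw [hu, star_add, star_mul, star_star, hesa.star_eq]
  have huu : star u * u = 1 := by
    rw [hstaru, hu, add_mul, mul_add, mul_add]
    have t1 : s * e * (e * star s) = s * e * star s := by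
      rw [← mul_assoc, mul_assoc s e e, heproj]
    have t2 : s * e * w = 0 := by rw [mul_assoc, hew, mul_zero]
    have t3 : star w * (e * star s) = 0 := by rw [← mul_assoc, hwse2, zero_mul]
    rw [t1, t2, t3, hw₁]
    abel
  have huu' : u * star u = 1 := by
    rw [hstaru, hu, add_mul, mul_add, mul_add]
    have t4 : e * star s * (s * e) = e := by
      rw [mul_assoc, ← mul_assoc (star s) s e, hss, one_mul, heproj]
    have t6 : w * (s * e) = 0 := by rw [← mul_assoc, hws]
    rw [t4, t5, t6, hw₂]
    abel
  have hmem : u ∈ unitary A := Unitary.mem_iff.mpr ⟨huu, huu'⟩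
  have hgoal2 : u * s * e = e := by
    rw [hu, add_mul, add_mul, mul_assoc e (star s) s, hss, mul_one, heproj, hws, add_zero]
  refine ⟨hmem, hgoal2, ?_⟩
  -- the state part
  have hqsa : star (1 - e) = 1 - e := by rw [star_sub, star_one, hesa.star_eq]
  have hqq : (1 - e) * (1 - e) = 1 - e := by
    rw [mul_sub, mul_one, sub_mul, one_mul, heproj, sub_self, sub_zero]
  have hq0 : φ ((1 - e) * (1 - e)) = 0 := by
    rw [hqq, map_sub, hφ.1, heφ, sub_self]
  have hnull := null_aux φ hφ.2 (1 - e) hqsa hq0 (u * s)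
  have hsplit : u * s = e + (u * s) * (1 - e) := by
    rw [mul_sub, mul_one, hgoal2]
    abel
  rw [hsplit, map_add, hnull, heφ, add_zero]
end
end

section
/- If a gauge-invariant state φ of the Cuntz algebra O_d is pure, then its restriction φ|_{UHF_d} to the fixed-point algebra of the gauge action is a pure state of UHF_d. -/
open scoped ComplexOrder

noncomputable section

variable {A : Type} [CStarAlgebra A] {d : ℕ}

section Stmt16Aux

variable {A : Type} [CStarAlgebra A] {d : ℕ}

open Real intervalIntegral

lemma tau_continuous (τ : Circle → A ≃⋆ₐ[ℂ] A) (z : Circle) : Continuous (τ z) :=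
  (StarAlgEquiv.isometry (τ z)).continuous

lemma dense_adjoin (S : CuntzFamily A d) :
    Dense ((StarAlgebra.adjoin ℂ (Set.range S.s) : StarSubalgebra ℂ A) : Set A) := by
  rw [dense_iff_closure_eq]
  exact congrArg SetLike.coe S.generates

lemma tau_apply_algebraMap (τ : Circle → A ≃⋆ₐ[ℂ] A) (z : Circle) (r : ℂ) :
    τ z (algebraMap ℂ A r) = algebraMap ℂ A r := by
  rw [Algebra.algebraMap_eq_smul_one, map_smul, map_one]

/-- The set of elements with continuous gauge orbit, as a star subalgebra. -/
def contSet (τ : Circle → A ≃⋆ₐ[ℂ] A) : StarSubalgebra ℂ A :=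
  { carrier := {x | Continuous fun t : ℝ => τ (Circle.exp t) x}
    mul_mem' := by
      intro x y hx hy
      have hx' : Continuous fun t : ℝ => τ (Circle.exp t) x := hx
      have hy' : Continuous fun t : ℝ => τ (Circle.exp t) y := hy
      show Continuous fun t : ℝ => τ (Circle.exp t) (x * y)
      have : (fun t : ℝ => τ (Circle.exp t) (x * y))
          = fun t : ℝ => τ (Circle.exp t) x * τ (Circle.exp t) y := by
        funext t; exact map_mul _ _ _
      rw [this]; exact hx'.mul hy'
    add_mem' := by
      intro x y hx hy
      have hx' : Continuous fun t : ℝ => τ (Circle.exp t) x := hx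
      have hy' : Continuous fun t : ℝ => τ (Circle.exp t) y := hy
      show Continuous fun t : ℝ => τ (Circle.exp t) (x + y)
      have : (fun t : ℝ => τ (Circle.exp t) (x + y))
          = fun t : ℝ => τ (Circle.exp t) x + τ (Circle.exp t) y := by
        funext t; exact map_add _ _ _
      rw [this]; exact hx'.add hy'
    algebraMap_mem' := by
      intro r
      show Continuous fun t : ℝ => τ (Circle.exp t) (algebraMap ℂ A r)
      have : (fun t : ℝ => τ (Circle.exp t) (algebraMap ℂ A r))
          = fun _ : ℝ => algebraMap ℂ A r := funext fun t => tau_apply_algebraMap τ _ r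
      rw [this]; exact continuous_const
    star_mem' := by
      intro x hx
      have hx' : Continuous fun t : ℝ => τ (Circle.exp t) x := hx
      show Continuous fun t : ℝ => τ (Circle.exp t) (star x)
      have : (fun t : ℝ => τ (Circle.exp t) (star x))
          = fun t : ℝ => star (τ (Circle.exp t) x) := by
        funext t; exact map_star _ _
      rw [this]; exact hx'.star }

/-- Continuity of the orbit map of the gauge action. -/
lemma tau_exp_continuous (S : CuntzFamily A d) (τ : Circle → A ≃⋆ₐ[ℂ] A)
    (hτ : ∀ z i, τ z (S.s i) = (z : ℂ) • S.s i) (a : A) :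
    Continuous fun t : ℝ => τ (Circle.exp t) a := by
  have hclosed : IsClosed ((contSet τ : StarSubalgebra ℂ A) : Set A) := by
    apply IsSeqClosed.isClosed
    intro u x hu hux
    have huni : TendstoUniformly (fun n (t : ℝ) => τ (Circle.exp t) (u n))
        (fun t : ℝ => τ (Circle.exp t) x) Filter.atTop := by
      rw [Metric.tendstoUniformly_iff]
      intro ε hε
      filter_upwards [Metric.tendsto_nhds.mp hux ε hε] with n hn t
      have : dist (τ (Circle.exp t) x) (τ (Circle.exp t) (u n)) = dist x (u n) := by
        rw [dist_eq_norm, dist_eq_norm, ← map_sub, StarAlgEquiv.norm_map]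
      rw [this, dist_comm]
      exact hn
    exact huni.continuous (Filter.Eventually.of_forall hu).frequently
  have hsub : Set.range S.s ⊆ ((contSet τ : StarSubalgebra ℂ A) : Set A) := by
    rintro _ ⟨i, rfl⟩
    show Continuous fun t : ℝ => τ (Circle.exp t) (S.s i)
    have : (fun t : ℝ => τ (Circle.exp t) (S.s i))
        = fun t : ℝ => Complex.exp (t * Complex.I) • S.s i := by
      funext t; rw [hτ, Circle.coe_exp]
    rw [this]
    exact (Continuous.cexp (by fun_prop)).smul continuous_const
  have h1 : ((StarAlgebra.adjoin ℂ (Set.range S.s) : StarSubalgebra ℂ A) : Set A)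
      ⊆ ((contSet τ : StarSubalgebra ℂ A) : Set A) := StarAlgebra.adjoin_le hsub
  have huniv : (Set.univ : Set A) ⊆ ((contSet τ : StarSubalgebra ℂ A) : Set A) := by
    rw [← (dense_adjoin S).closure_eq]
    exact (closure_mono h1).trans hclosed.closure_eq.subset
  exact huniv (Set.mem_univ a)

/-- The equalizer of `τ z ∘ τ w` and `τ (z * w)`, as a star subalgebra. -/
def eqSet (τ : Circle → A ≃⋆ₐ[ℂ] A) (z w : Circle) : StarSubalgebra ℂ A :=
  { carrier := {x | τ z (τ w x) = τ (z * w) x}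
    mul_mem' := by
      intro x y hx hy
      have hx' : τ z (τ w x) = τ (z * w) x := hx
      have hy' : τ z (τ w y) = τ (z * w) y := hy
      show τ z (τ w (x * y)) = τ (z * w) (x * y)
      rw [map_mul, map_mul, map_mul, hx', hy']
    add_mem' := by
      intro x y hx hy
      have hx' : τ z (τ w x) = τ (z * w) x := hx
      have hy' : τ z (τ w y) = τ (z * w) y := hy
      show τ z (τ w (x + y)) = τ (z * w) (x + y)
      rw [map_add, map_add, map_add, hx', hy']
    algebraMap_mem' := by
      intro r
      show τ z (τ w (algebraMap ℂ A r)) = τ (z * w) (algebraMap ℂ A r)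
      rw [tau_apply_algebraMap, tau_apply_algebraMap, tau_apply_algebraMap]
    star_mem' := by
      intro x hx
      have hx' : τ z (τ w x) = τ (z * w) x := hx
      show τ z (τ w (star x)) = τ (z * w) (star x)
      rw [map_star, map_star, map_star, hx'] }

/-- The gauge action is multiplicative. -/
lemma tau_mul (S : CuntzFamily A d) (τ : Circle → A ≃⋆ₐ[ℂ] A)
    (hτ : ∀ z i, τ z (S.s i) = (z : ℂ) • S.s i) (z w : Circle) (a : A) :
    τ z (τ w a) = τ (z * w) a := by
  have hclosed : IsClosed ((eqSet τ z w : StarSubalgebra ℂ A) : Set A) :=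
    isClosed_eq ((tau_continuous τ z).comp (tau_continuous τ w)) (tau_continuous τ (z * w))
  have hsub : Set.range S.s ⊆ ((eqSet τ z w : StarSubalgebra ℂ A) : Set A) := by
    rintro _ ⟨i, rfl⟩
    show τ z (τ w (S.s i)) = τ (z * w) (S.s i)
    rw [hτ, map_smul, hτ, hτ, smul_smul]
    norm_cast
    rw [mul_comm]
  have h1 : ((StarAlgebra.adjoin ℂ (Set.range S.s) : StarSubalgebra ℂ A) : Set A)
      ⊆ ((eqSet τ z w : StarSubalgebra ℂ A) : Set A) := StarAlgebra.adjoin_le hsub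
  have huniv : (Set.univ : Set A) ⊆ ((eqSet τ z w : StarSubalgebra ℂ A) : Set A) := by
    rw [← (dense_adjoin S).closure_eq]
    exact (closure_mono h1).trans hclosed.closure_eq.subset
  exact huniv (Set.mem_univ a)

lemma tau_periodic (τ : Circle → A ≃⋆ₐ[ℂ] A) (a : A) :
    Function.Periodic (fun t : ℝ => τ (Circle.exp t) a) (2 * Real.pi) := by
  intro t
  simp only [Circle.exp_add, Circle.exp_two_pi, mul_one]

/-- Averaging over the gauge orbit. -/
noncomputable def gaugeAvg (τ : Circle → A ≃⋆ₐ[ℂ] A) (a : A) : A :=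
  (2 * Real.pi)⁻¹ • ∫ t in (0:ℝ)..(2 * Real.pi), τ (Circle.exp t) a

/-- The gauge automorphisms as continuous linear maps. -/
noncomputable def tauCLM (τ : Circle → A ≃⋆ₐ[ℂ] A) (w : Circle) : A →L[ℂ] A :=
  { toLinearMap :=
      { toFun := τ w
        map_add' := fun x y => map_add _ x y
        map_smul' := fun c x => map_smul _ c x }
    cont := tau_continuous τ w }

lemma tauCLM_apply (τ : Circle → A ≃⋆ₐ[ℂ] A) (w : Circle) (a : A) :
    tauCLM τ w a = τ w a := rfl

end Stmt16Aux

/-- If a gauge-invariant state `φ` of `O_d` is pure, then its restriction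
to the fixed point algebra `UHF_d` of the gauge action is a pure state of `UHF_d`. -/
theorem stmt_16 {A : Type} [CStarAlgebra A] {d : ℕ} (hd : 2 ≤ d) (S : CuntzFamily A d)
    (τ : Circle → A ≃⋆ₐ[ℂ] A) (hτ : ∀ z i, τ z (S.s i) = (z : ℂ) • S.s i)
    (φ : A →L[ℂ] ℂ) (hφ : IsPureState φ) (hinv : ∀ z a, φ (τ z a) = φ a) :
    IsPureOn (fixedAlgebra τ : Set A) φ := by
  classical
  intro ψ₁ ψ₂ t hs1 hs2 ht0 ht1 hdecomp
  have two_pi_pos : (0:ℝ) < 2 * Real.pi := by positivity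
  have hc : ∀ a : A, Continuous fun u : ℝ => τ (Circle.exp u) a := tau_exp_continuous S τ hτ
  have hint : ∀ a : A, IntervalIntegrable (fun u : ℝ => τ (Circle.exp u) a)
      MeasureTheory.volume 0 (2 * Real.pi) := fun a => (hc a).intervalIntegrable _ _
  -- `gaugeAvg` lands in the fixed-point algebra
  have hfix : ∀ a : A, gaugeAvg τ a ∈ fixedAlgebra τ := by
    intro a w
    obtain ⟨t₀, ht₀⟩ : ∃ t₀ : ℝ, Circle.exp t₀ = w := ⟨_, Circle.exp_arg w⟩
    have key : ∀ u : ℝ, τ w (τ (Circle.exp u) a) = τ (Circle.exp (t₀ + u)) a := by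
      intro u
      rw [tau_mul S τ hτ, ← ht₀, ← Circle.exp_add]
    calc τ w (gaugeAvg τ a)
        = tauCLM τ w ((2 * Real.pi)⁻¹ • ∫ u in (0:ℝ)..(2 * Real.pi),
            τ (Circle.exp u) a) := rfl
      _ = (2 * Real.pi)⁻¹ • tauCLM τ w (∫ u in (0:ℝ)..(2 * Real.pi),
            τ (Circle.exp u) a) := by rw [(tauCLM τ w).map_smul_of_tower]
      _ = (2 * Real.pi)⁻¹ • ∫ u in (0:ℝ)..(2 * Real.pi),
            tauCLM τ w (τ (Circle.exp u) a) := by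
            rw [(tauCLM τ w).intervalIntegral_comp_comm (hint a)]
      _ = (2 * Real.pi)⁻¹ • ∫ u in (0:ℝ)..(2 * Real.pi),
            τ (Circle.exp (t₀ + u)) a := by
            congr 1
            refine intervalIntegral.integral_congr fun u _ => ?_
            rw [tauCLM_apply, key]
      _ = (2 * Real.pi)⁻¹ • ∫ u in (t₀ + 0)..(t₀ + 2 * Real.pi),
            τ (Circle.exp u) a := by
            rw [intervalIntegral.integral_comp_add_left (fun u => τ (Circle.exp u) a)]
      _ = gaugeAvg τ a := by
            unfold gaugeAvg
            congr 1
            rw [add_zero]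
            have := (tau_periodic τ a).intervalIntegral_add_eq t₀ 0
            rw [zero_add] at this
            exact this
  -- `gaugeAvg` is the identity on the fixed-point algebra
  have hfixed_id : ∀ b ∈ fixedAlgebra τ, gaugeAvg τ b = b := by
    intro b hb
    unfold gaugeAvg
    have : (fun u : ℝ => τ (Circle.exp u) b) = fun _ : ℝ => b := funext fun u => hb _
    rw [this, intervalIntegral.integral_const, sub_zero, smul_smul,
      inv_mul_cancel₀ two_pi_pos.ne', one_smul]
  -- `gaugeAvg` as a continuous linear map
  let Elm : A →ₗ[ℂ] A :=
    { toFun := gaugeAvg τ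
      map_add' := fun a b => by
        show gaugeAvg τ (a + b) = gaugeAvg τ a + gaugeAvg τ b
        unfold gaugeAvg
        have : (fun u : ℝ => τ (Circle.exp u) (a + b))
            = fun u : ℝ => τ (Circle.exp u) a + τ (Circle.exp u) b :=
          funext fun u => map_add _ _ _
        rw [this, intervalIntegral.integral_add (hint a) (hint b), smul_add]
      map_smul' := fun c a => by
        show gaugeAvg τ (c • a) = RingHom.id ℂ c • gaugeAvg τ a
        unfold gaugeAvg
        have : (fun u : ℝ => τ (Circle.exp u) (c • a))
            = fun u : ℝ => c • τ (Circle.exp u) a := funext fun u => map_smul _ _ _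
        rw [this, intervalIntegral.integral_smul, RingHom.id_apply, smul_comm] }
  have hbound : ∀ a : A, ‖Elm a‖ ≤ 1 * ‖a‖ := by
    intro a
    have h1 : ‖∫ u in (0:ℝ)..(2 * Real.pi), τ (Circle.exp u) a‖
        ≤ ‖a‖ * |2 * Real.pi - 0| := by
      refine intervalIntegral.norm_integral_le_of_norm_le_const fun u _ => ?_
      rw [StarAlgEquiv.norm_map]
    have h2 : ‖Elm a‖ = |(2 * Real.pi)⁻¹| * ‖∫ u in (0:ℝ)..(2 * Real.pi),
        τ (Circle.exp u) a‖ := norm_smul _ _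
    rw [h2, abs_of_pos (by positivity)]
    calc (2 * Real.pi)⁻¹ * ‖∫ u in (0:ℝ)..(2 * Real.pi), τ (Circle.exp u) a‖
        ≤ (2 * Real.pi)⁻¹ * (‖a‖ * |2 * Real.pi - 0|) := by
          exact mul_le_mul_of_nonneg_left h1 (by positivity)
      _ = 1 * ‖a‖ := by
          rw [sub_zero, abs_of_pos two_pi_pos]
          field_simp
  let E : A →L[ℂ] A := Elm.mkContinuous 1 hbound
  have hE : ∀ a : A, E a = gaugeAvg τ a := fun a => rfl
  -- a continuous linear functional applied to the average
  have happly : ∀ (ψ : A →L[ℂ] ℂ) (a : A),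
      ψ (E a) = (2 * Real.pi)⁻¹ • ∫ u in (0:ℝ)..(2 * Real.pi), ψ (τ (Circle.exp u) a) := by
    intro ψ a
    rw [hE]
    unfold gaugeAvg
    rw [ψ.map_smul_of_tower, ψ.intervalIntegral_comp_comm (hint a)]
  -- `φ` is invariant under averaging
  have hphiE : ∀ a : A, φ (E a) = φ a := by
    intro a
    rw [happly]
    have : (fun u : ℝ => φ (τ (Circle.exp u) a)) = fun _ : ℝ => φ a :=
      funext fun u => hinv _ _
    rw [this, intervalIntegral.integral_const, sub_zero, smul_smul,
      inv_mul_cancel₀ two_pi_pos.ne', one_smul]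
  -- composing a state with the average yields a state
  have hstate : ∀ ψ : A →L[ℂ] ℂ, IsState ψ → IsState (ψ.comp E) := by
    intro ψ hψ
    constructor
    · show ψ (E 1) = 1
      rw [hE, hfixed_id 1 (fun z => map_one _), hψ.1]
    · intro a
      show (0:ℂ) ≤ ψ (E (star a * a))
      rw [happly]
      set g : ℝ → ℂ := fun u => ψ (τ (Circle.exp u) (star a * a)) with hg_def
      have hg : ∀ u : ℝ, 0 ≤ g u := by
        intro u
        have : τ (Circle.exp u) (star a * a)
            = star (τ (Circle.exp u) a) * τ (Circle.exp u) a := by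
          rw [map_mul, map_star]
        rw [hg_def]
        simp only
        rw [this]
        exact hψ.2 _
      have hgre : ∀ u : ℝ, g u = ((g u).re : ℂ) := by
        intro u
        have h := Complex.le_def.mp (hg u)
        apply Complex.ext
        · simp
        · simp [← h.2]
      have hre : (fun u : ℝ => g u) = fun u : ℝ => (((g u).re : ℝ) : ℂ) := funext hgre
      have hcongr : (∫ u in (0:ℝ)..(2 * Real.pi), g u)
          = ∫ u in (0:ℝ)..(2 * Real.pi), (((g u).re : ℝ) : ℂ) :=
        intervalIntegral.integral_congr fun u _ => hgre u
      rw [hcongr, intervalIntegral.integral_ofReal, Complex.real_smul, ← Complex.ofReal_mul]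
      rw [Complex.zero_le_real]
      refine mul_nonneg (by positivity) ?_
      refine intervalIntegral.integral_nonneg two_pi_pos.le fun u _ => ?_
      exact (Complex.le_def.mp (hg u)).1
  -- the decomposition extends to all of `A` after averaging
  have hdecomp' : ∀ a : A, φ a = t * (ψ₁.comp E) a + (1 - t) * (ψ₂.comp E) a := by
    intro a
    have := hdecomp (E a) (hfix a)
    rw [hphiE a] at this
    exact this
  have hpure := hφ.2 (ψ₁.comp E) (ψ₂.comp E) t (hstate ψ₁ hs1) (hstate ψ₂ hs2) ht0 ht1
    (fun b _ => hdecomp' b)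
  intro b hb
  have h1 := hpure b (Set.mem_univ b)
  have h2 : (ψ₁.comp E) b = ψ₁ b := by
    show ψ₁ (E b) = ψ₁ b
    rw [hE, hfixed_id b hb]
  rw [← h2, h1]
end
end
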